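/- There exists w₀ ∈ W_G such that w₀·δ_G = δ_G − Σ_{θ∈Λ} θ. -/

import Mathlib

/-!
Perturbing `δK` by a small multiple of the vector representing the functional `f` that defines
the positive system gives a regular vector `v` whose positive roots pairing negatively with it are
exactly `Λ`. An element `w` of the (finite) Weyl group maximising `f` on the orbit of `v` makes
`w v` dominant, so `w⁻¹` carries the positive roots onto the roots positive on `v`: the roots
of `Λ` get replaced by their negatives, and `w⁻¹ δG = δG - ∑ θ ∈ Λ, θ`.
-/

open scoped RealInnerProductSpace

/-- The reflection in the hyperplane orthogonal to `α`. -/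
noncomputable def rootReflection {V : Type*} [NormedAddCommGroup V] [InnerProductSpace ℝ V]
    [FiniteDimensional ℝ V] (α : V) : V ≃ₗᵢ[ℝ] V :=
  Submodule.reflection ((ℝ ∙ α)ᗮ)

/-- The Weyl group: the group generated by the reflections in the roots. -/
noncomputable def weylGroup {V : Type*} [NormedAddCommGroup V] [InnerProductSpace ℝ V]
    [FiniteDimensional ℝ V] (Φ : Finset V) : Subgroup (V ≃ₗᵢ[ℝ] V) :=
  Subgroup.closure { w | ∃ α ∈ Φ, w = rootReflection α }

open Finset Filter Topology

theorem sum_filter_pos_eq_sub_two_smul {V : Type*} [AddCommGroup V] [Module ℝ V]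
    (Φ : Finset V) (hneg : ∀ α ∈ Φ, -α ∈ Φ) (f g : V →ₗ[ℝ] ℝ)
    (hf : ∀ α ∈ Φ, f α ≠ 0) (hg : ∀ α ∈ Φ, g α ≠ 0) :
    ∑ α ∈ Φ with 0 < g α, α =
      ∑ α ∈ Φ with 0 < f α, α - (2 : ℝ) • ∑ α ∈ Φ with 0 < f α ∧ g α < 0, α := by
  have split_g : ∑ α ∈ Φ with 0 < g α, α =
      ∑ α ∈ Φ with 0 < g α ∧ 0 < f α, α + ∑ α ∈ Φ with 0 < g α ∧ f α < 0, α := by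
    rw [← sum_filter_add_sum_filter_not _ (fun α => 0 < f α), filter_filter, filter_filter]
    congr 2
    exact filter_congr fun α hα => by rw [not_lt, (hf α hα).le_iff_lt]
  have split_f : ∑ α ∈ Φ with 0 < f α, α =
      ∑ α ∈ Φ with 0 < g α ∧ 0 < f α, α + ∑ α ∈ Φ with 0 < f α ∧ g α < 0, α := by
    rw [← sum_filter_add_sum_filter_not _ (fun α => 0 < g α), filter_filter, filter_filter]
    congr 2
    · exact filter_congr fun α _ => and_comm
    · exact filter_congr fun α hα => by rw [not_lt, (hg α hα).le_iff_lt]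
  have flip : ∑ α ∈ Φ with 0 < g α ∧ f α < 0, α = -∑ α ∈ Φ with 0 < f α ∧ g α < 0, α := by
    rw [← sum_neg_distrib]
    refine sum_nbij' Neg.neg Neg.neg ?_ ?_ (by simp) (by simp) (by simp) <;>
      simp +contextual [hneg]
  rw [split_g, split_f, flip, two_smul]
  abel

section WeylGroup

variable {V : Type*} [NormedAddCommGroup V] [InnerProductSpace ℝ V] [FiniteDimensional ℝ V]

theorem rootReflection_apply (α v : V) :
    rootReflection α v = v - (2 * ⟪α, v⟫ / ‖α‖ ^ 2) • α := by
  rw [rootReflection, Submodule.reflection_orthogonal_apply, Submodule.reflection_singleton_apply,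
    ← Nat.cast_smul_eq_nsmul ℝ, smul_smul, neg_sub]
  norm_num [mul_div_assoc]

theorem rootReflection_self (α : V) : rootReflection α α = -α :=
  Submodule.reflection_orthogonalComplement_singleton_eq_neg α

theorem rootReflection_mem_weylGroup {Φ : Finset V} {α : V} (hα : α ∈ Φ) :
    rootReflection α ∈ weylGroup Φ :=
  Subgroup.subset_closure ⟨α, hα, rfl⟩

variable {Φ : Finset V} (hrefl : ∀ α ∈ Φ, ∀ β ∈ Φ, rootReflection α β ∈ Φ)
include hrefl

theorem neg_root_mem {α : V} (hα : α ∈ Φ) : -α ∈ Φ := by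
  simpa [rootReflection_self] using hrefl α hα α hα

theorem weylGroup_apply_mem_iff {w : V ≃ₗᵢ[ℝ] V} (hw : w ∈ weylGroup Φ) (β : V) :
    w β ∈ Φ ↔ β ∈ Φ := by
  have refl_iff (α : V) (hα : α ∈ Φ) (β : V) : rootReflection α β ∈ Φ ↔ β ∈ Φ :=
    ⟨fun h => by simpa [rootReflection, Submodule.reflection_reflection] using hrefl α hα _ h,
      hrefl α hα β⟩
  induction hw using Subgroup.closure_induction'' generalizing β with
  | mem _ h => obtain ⟨α, hα, rfl⟩ := h; exact refl_iff α hα β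
  | inv_mem _ h =>
    obtain ⟨α, hα, rfl⟩ := h
    simpa [LinearIsometryEquiv.coe_inv, rootReflection, Submodule.reflection_symm] using
      refl_iff α hα β
  | one => simp
  | mul _ _ _ _ hx hy => simp [hx, hy]

theorem sum_filter_symm_apply_of_mem_weylGroup {w : V ≃ₗᵢ[ℝ] V} (hw : w ∈ weylGroup Φ)
    (p : V → Prop) [DecidablePred p] :
    ∑ α ∈ Φ with p α, w.symm α = ∑ α ∈ Φ with p (w α), α :=
  (sum_equiv w.toEquiv (fun α => by simp [weylGroup_apply_mem_iff hrefl hw]) (by simp)).symm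

theorem finite_weylGroup (hspan : Submodule.span ℝ (Φ : Set V) = ⊤) : Finite (weylGroup Φ) := by
  let restrict (w : weylGroup Φ) : Φ → Φ :=
    fun α => ⟨w.1 α, (weylGroup_apply_mem_iff hrefl w.2 α).2 α.2⟩
  refine Finite.of_injective restrict fun w₁ w₂ h => Subtype.ext <| LinearIsometryEquiv.ext ?_
  have agree_on_Φ : Set.EqOn w₁.1 w₂.1 Φ := fun α hα => congrArg Subtype.val (congrFun h ⟨α, hα⟩)
  exact LinearMap.congr_fun (LinearMap.ext_on (f := w₁.1.toLinearEquiv.toLinearMap)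
    (g := w₂.1.toLinearEquiv.toLinearMap) hspan agree_on_Φ)

theorem exists_weylGroup_dominant (hspan : Submodule.span ℝ (Φ : Set V) = ⊤)
    (f : V →ₗ[ℝ] ℝ) (v : V) :
    ∃ w ∈ weylGroup Φ, ∀ α ∈ Φ, 0 < f α → 0 ≤ ⟪α, w v⟫ := by
  have := finite_weylGroup hrefl hspan
  obtain ⟨w, hmax⟩ := Finite.exists_max fun w : weylGroup Φ => f (w.1 v)
  refine ⟨w, w.2, fun α hα hfα => not_lt.1 fun hneg => ?_⟩
  have hα0 : α ≠ 0 := by rintro rfl; simp at hneg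
  have hcoeff : 2 * ⟪α, w.1 v⟫ / ‖α‖ ^ 2 * f α < 0 := mul_neg_of_neg_of_pos
    (div_neg_of_neg_of_pos (by linarith) (pow_pos (norm_pos_iff.2 hα0) 2)) hfα
  have := hmax ⟨rootReflection α * w, mul_mem (rootReflection_mem_weylGroup hα) w.2⟩
  simp only [LinearIsometryEquiv.coe_mul, Function.comp_apply, rootReflection_apply, map_sub,
    map_smul, smul_eq_mul] at this
  linarith

theorem exists_weylGroup_pos_iff (hspan : Submodule.span ℝ (Φ : Set V) = ⊤)
    (f : V →ₗ[ℝ] ℝ) (hf : ∀ α ∈ Φ, f α ≠ 0) (v : V) (hv : ∀ α ∈ Φ, ⟪α, v⟫ ≠ 0) :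
    ∃ w ∈ weylGroup Φ, ∀ α ∈ Φ, 0 < f (w α) ↔ 0 < ⟪α, v⟫ := by
  obtain ⟨w, hw, hdom⟩ := exists_weylGroup_dominant hrefl hspan f v
  refine ⟨w, hw, fun α hα => ⟨fun h => ?_, fun h => ?_⟩⟩
  · have hwα := (weylGroup_apply_mem_iff hrefl hw α).2 hα
    rw [← w.inner_map_map]
    exact lt_of_le_of_ne (hdom _ hwα h) (by simpa [w.inner_map_map] using (hv α hα).symm)
  · by_contra! hle
    have hwα := (weylGroup_apply_mem_iff hrefl hw α).2 hα
    have := hdom _ (neg_root_mem hrefl hwα) (by simpa using hle.lt_of_ne (hf _ hwα))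
    rw [inner_neg_left, w.inner_map_map] at this
    linarith

end WeylGroup

theorem exists_regular_perturbation {V : Type*} [NormedAddCommGroup V] [InnerProductSpace ℝ V]
    [FiniteDimensional ℝ V] (Φ : Finset V) (f : V →ₗ[ℝ] ℝ) (hf : ∀ α ∈ Φ, f α ≠ 0) (y : V) :
    ∃ v : V, (∀ α ∈ Φ, ⟪α, v⟫ ≠ 0) ∧ ∀ α ∈ Φ, 0 < f α → (⟪α, v⟫ < 0 ↔ ⟪α, y⟫ < 0) := by
  let u := (InnerProductSpace.toDual ℝ V).symm (LinearMap.toContinuousLinearMap f)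
  have inner_perturb (α : V) (ε : ℝ) : ⟪α, y + ε • u⟫ = ⟪α, y⟫ + ε * f α := by
    rw [inner_add_right, real_inner_smul_right, ← real_inner_comm α u,
      InnerProductSpace.toDual_symm_apply]
    rfl
  have keeps_sign (α : V) : ∀ᶠ ε in 𝓝 (0 : ℝ),
      (⟪α, y⟫ < 0 → ⟪α, y⟫ + ε * f α < 0) ∧ (0 < ⟪α, y⟫ → 0 < ⟪α, y⟫ + ε * f α) := by
    have hlim : Tendsto (fun ε : ℝ => ⟪α, y⟫ + ε * f α) (𝓝 0) (𝓝 ⟪α, y⟫) :=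
      (by fun_prop : Continuous fun ε : ℝ => ⟪α, y⟫ + ε * f α).tendsto' 0 _ (by simp)
    rcases lt_trichotomy ⟪α, y⟫ 0 with h | h | h
    · filter_upwards [hlim.eventually_lt_const h] with ε hε
      exact ⟨fun _ => hε, fun h' => absurd h' h.not_gt⟩
    · simp [h]
    · filter_upwards [hlim.eventually_const_lt h] with ε hε
      exact ⟨fun h' => absurd h' h.not_gt, fun _ => hε⟩
  obtain ⟨ε, hε, hεpos⟩ := (((eventually_all_finset Φ).2 fun α _ => keeps_sign α).filter_mono
    nhdsWithin_le_nhds |>.and self_mem_nhdsWithin).exists (f := 𝓝[>] (0 : ℝ))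
  refine ⟨y + ε • u, fun α hα => ?_, fun α hα hfα => ?_⟩ <;> rw [inner_perturb] <;>
    obtain ⟨hneg, hpos⟩ := hε α hα
  · rcases lt_trichotomy ⟪α, y⟫ 0 with h | h | h
    · exact (hneg h).ne
    · simpa [h] using ⟨hεpos.ne', hf α hα⟩
    · exact (hpos h).ne'
  · exact ⟨fun h => not_le.1 fun h' => by linarith [mul_pos hεpos hfα], hneg⟩

theorem stmt6_general {V : Type*} [NormedAddCommGroup V] [InnerProductSpace ℝ V] [FiniteDimensional ℝ V]
    (Φ : Finset V)
    (hspan : Submodule.span ℝ (Φ : Set V) = ⊤)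
    (hrefl : ∀ α ∈ Φ, ∀ β ∈ Φ, rootReflection α β ∈ Φ)
    (ΦGp : Finset V)
    (hΦGp : ∃ f : V →ₗ[ℝ] ℝ, (∀ α ∈ Φ, f α ≠ 0) ∧ ∀ α, α ∈ ΦGp ↔ α ∈ Φ ∧ 0 < f α)
    (δG : V) (hδG : δG = (2⁻¹ : ℝ) • ∑ α ∈ ΦGp, α)
    (δK : V)
    (Λ : Finset V) (hΛ : ∀ θ, θ ∈ Λ ↔ θ ∈ ΦGp ∧ ⟪θ, δK⟫ < 0) :
    ∃ w₀ ∈ weylGroup Φ, w₀ δG = δG - ∑ θ ∈ Λ, θ := by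
  classical
  obtain ⟨f, hf, hΦGp⟩ := hΦGp
  obtain ⟨v, hv, hvδK⟩ := exists_regular_perturbation Φ f hf δK
  obtain ⟨w, hw, hwv⟩ := exists_weylGroup_pos_iff hrefl hspan f hf v hv
  have hΦGp_eq : ΦGp = {α ∈ Φ | 0 < f α} := by ext; simp [hΦGp]
  have hΛ_eq : Λ = {α ∈ Φ | 0 < f α ∧ innerₗ V v α < 0} := by
    ext α
    simp only [hΛ, hΦGp, mem_filter, and_assoc]
    refine and_congr_right fun hα => and_congr_right fun hfα => ?_
    rw [← hvδK α hα hfα, real_inner_comm]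
    rfl
  have hsum : ∑ α ∈ ΦGp, w⁻¹ α = ∑ α ∈ Φ with 0 < innerₗ V v α, α := by
    rw [hΦGp_eq, LinearIsometryEquiv.coe_inv, sum_filter_symm_apply_of_mem_weylGroup hrefl hw]
    congr 1
    exact filter_congr fun α hα => by simp [hwv α hα, real_inner_comm]
  refine ⟨w⁻¹, inv_mem hw, ?_⟩
  rw [hδG, map_smul, map_sum, hsum, sum_filter_pos_eq_sub_two_smul Φ (fun _ => neg_root_mem hrefl)
    f (innerₗ V v) hf (fun α hα => by simpa [real_inner_comm] using hv α hα), ← hΦGp_eq, ← hΛ_eq]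
  module

theorem stmt6 {V : Type*} [NormedAddCommGroup V] [InnerProductSpace ℝ V] [FiniteDimensional ℝ V]
    (Φ : Finset V) (hΦ0 : (0 : V) ∉ Φ)
    (hspan : Submodule.span ℝ (Φ : Set V) = ⊤)
    (hred : ∀ α ∈ Φ, ∀ t : ℝ, t • α ∈ Φ → t = 1 ∨ t = -1)
    (hrefl : ∀ α ∈ Φ, ∀ β ∈ Φ, rootReflection α β ∈ Φ)
    (ΦGp : Finset V)
    (hΦGp : ∃ f : V →ₗ[ℝ] ℝ, (∀ α ∈ Φ, f α ≠ 0) ∧ ∀ α, α ∈ ΦGp ↔ α ∈ Φ ∧ 0 < f α)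
    (δG : V) (hδG : δG = (2⁻¹ : ℝ) • ∑ α ∈ ΦGp, α)
    (ΦK : Finset V) (hΦKsub : ΦK ⊆ Φ)
    (hΦKneg : ∀ α ∈ ΦK, -α ∈ ΦK)
    (hΦKrefl : ∀ α ∈ ΦK, ∀ β ∈ ΦK, rootReflection α β ∈ ΦK)
    (ΦKp : Finset V) (hΦKp : ∀ α, α ∈ ΦKp ↔ α ∈ ΦK ∧ α ∈ ΦGp)
    (δK : V) (hδK : δK = (2⁻¹ : ℝ) • ∑ α ∈ ΦKp, α)
    (Λ : Finset V) (hΛ : ∀ θ, θ ∈ Λ ↔ θ ∈ ΦGp ∧ ⟪θ, δK⟫ < 0)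
    (hinner : ∃ x : V, (∀ θ ∈ Φ, ∃ n : ℤ, ⟪θ, x⟫ = n / 2) ∧
      (∀ θ, θ ∈ ΦK ↔ θ ∈ Φ ∧ ∃ n : ℤ, ⟪θ, x⟫ = (n : ℝ))) :
    ∃ w₀ ∈ weylGroup Φ, w₀ δG = δG - ∑ θ ∈ Λ, θ :=
  stmt6_general Φ hspan hrefl ΦGp hΦGp δG hδG δK Λ hΛ
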